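/- arXiv:2103.05381 — 2 statements merged into one kernel-verified Lean document; each statement's English description precedes it below -/
import Mathlib

section
/- Let ρ_AB be a density matrix on ℂ^m⊗ℂ^n and ρ_CD a density matrix on ℂ^u⊗ℂ^v. Suppose there exists a rank-one von Neumann measurement {Π_h} on ℂ^n⊗ℂ^u fixing ρ_B⊗ρ_C such that Π^{BC}(√(ρ_AB⊗ρ_CD)) = √(ρ_AB⊗ρ_CD). Then both ρ_AB and ρ_CD are separable, where a density matrix τ on ℂ^p⊗ℂ^q is called separable if τ = Σ_k t_k (σ_k ⊗ ω_k) for some finitely many t_k ≥ 0 and density matrices σ_k on ℂ^p, ω_k on ℂ^q. -/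
open scoped Matrix Kronecker BigOperators ComplexOrder
open Matrix

/-- The positive-semidefinite square root of a PSD matrix (0 if not PSD). -/
noncomputable def psdSqrt {N : Type*} [Fintype N] [DecidableEq N] (A : Matrix N N ℂ) :
    Matrix N N ℂ :=
  open scoped Classical in
  if h : A.PosSemidef then
    (h.1.eigenvectorUnitary : Matrix N N ℂ) *
      diagonal ((↑) ∘ (√·) ∘ h.1.eigenvalues) * (star h.1.eigenvectorUnitary : Matrix N N ℂ)
  else 0

/-- Squared Frobenius (Hilbert–Schmidt) norm: `‖X‖² = tr (Xᴴ X)`. -/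
noncomputable def hsNormSq {N : Type*} [Fintype N] (X : Matrix N N ℂ) : ℝ :=
  (Matrix.trace (Xᴴ * X)).re

/-- A density matrix: positive semidefinite with unit trace. -/
def IsDensity {N : Type*} [Fintype N] [DecidableEq N] (ρ : Matrix N N ℂ) : Prop :=
  ρ.PosSemidef ∧ ρ.trace = 1

/-- Standard inner product on `ℂ^N`. -/
noncomputable def cInner {N : Type*} [Fintype N] (x y : N → ℂ) : ℂ :=
  ∑ i, star (x i) * y i

/-- Outer product `ψ ψ†`. -/
noncomputable def outer {N : Type*} (ψ : N → ℂ) : Matrix N N ℂ :=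
  Matrix.vecMulVec ψ (star ψ)

/-- The family of unit vectors of a rank-one von Neumann measurement: an orthonormal basis,
indexed by the dimension. -/
def IsVNM {N : Type*} [Fintype N] [DecidableEq N] (u : N → N → ℂ) : Prop :=
  ∀ a b, cInner (u a) (u b) = if a = b then (1 : ℂ) else 0

/-- The rank-one projection `Π_h = u_h u_h†` of a measurement. -/
noncomputable def projOf {N : Type*} (u : N → N → ℂ) (h : N) : Matrix N N ℂ :=
  outer (u h)

/-- The measurement `{u_h u_h†}` fixes `σ`: `Σ_h Π_h σ Π_h = σ`. -/
def FixesVNM {N : Type*} [Fintype N] (u : N → N → ℂ) (σ : Matrix N N ℂ) : Prop :=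
  ∑ h, projOf u h * σ * projOf u h = σ

/-- Reduced state of the second factor: `(ρ_B)_{j j'} = Σ_i ρ_{(i,j),(i,j')}`. -/
noncomputable def redB {m n : ℕ} (ρ : Matrix (Fin m × Fin n) (Fin m × Fin n) ℂ) :
    Matrix (Fin n) (Fin n) ℂ :=
  Matrix.of fun j j' => ∑ i, ρ (i, j) (i, j')

/-- Reduced state of the first factor: `(ρ_C)_{k k'} = Σ_l ρ_{(k,l),(k',l)}`. -/
noncomputable def redC {u v : ℕ} (ρ : Matrix (Fin u × Fin v) (Fin u × Fin v) ℂ) :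
    Matrix (Fin u) (Fin u) ℂ :=
  Matrix.of fun k k' => ∑ l, ρ (k, l) (k', l)

/-- `I_m ⊗ P ⊗ I_v` acting on the middle two factors. -/
noncomputable def ampMid (m v : ℕ) {n u : ℕ} (P : Matrix (Fin n × Fin u) (Fin n × Fin u) ℂ) :
    Matrix ((Fin m × Fin n) × Fin u × Fin v) ((Fin m × Fin n) × Fin u × Fin v) ℂ :=
  Matrix.of fun p q =>
    (if p.1.1 = q.1.1 then (1 : ℂ) else 0) * P (p.1.2, p.2.1) (q.1.2, q.2.1) *
      (if p.2.2 = q.2.2 then (1 : ℂ) else 0)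

/-- The map `Π^{BC}(X) = Σ_h (I_m ⊗ Π_h ⊗ I_v) X (I_m ⊗ Π_h ⊗ I_v)`. -/
noncomputable def pinchBC {m n u v : ℕ} (w : (Fin n × Fin u) → (Fin n × Fin u) → ℂ)
    (X : Matrix ((Fin m × Fin n) × Fin u × Fin v) ((Fin m × Fin n) × Fin u × Fin v) ℂ) :
    Matrix ((Fin m × Fin n) × Fin u × Fin v) ((Fin m × Fin n) × Fin u × Fin v) ℂ :=
  ∑ h, ampMid m v (projOf w h) * X * ampMid m v (projOf w h)

/-- The measurement-induced nonbilocality `N_H^b(ρ_AB ⊗ ρ_CD)`. -/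
noncomputable def NHb {m n u v : ℕ}
    (ρAB : Matrix (Fin m × Fin n) (Fin m × Fin n) ℂ)
    (ρCD : Matrix (Fin u × Fin v) (Fin u × Fin v) ℂ) : ℝ :=
  sSup { r : ℝ | ∃ w : (Fin n × Fin u) → (Fin n × Fin u) → ℂ,
    IsVNM w ∧ FixesVNM w (redB ρAB ⊗ₖ redC ρCD) ∧
    r = hsNormSq (psdSqrt (ρAB ⊗ₖ ρCD) - pinchBC w (psdSqrt (ρAB ⊗ₖ ρCD))) }

/-- A separable density matrix on `ℂ^p ⊗ ℂ^q`. -/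
def Separable {p q : ℕ} (τ : Matrix (Fin p × Fin q) (Fin p × Fin q) ℂ) : Prop :=
  ∃ (k : ℕ) (t : Fin k → ℝ) (σ : Fin k → Matrix (Fin p) (Fin p) ℂ)
    (ω : Fin k → Matrix (Fin q) (Fin q) ℂ),
    (∀ i, 0 ≤ t i) ∧ (∀ i, IsDensity (σ i)) ∧ (∀ i, IsDensity (ω i)) ∧
      τ = ∑ i, ((t i : ℝ) : ℂ) • (σ i ⊗ₖ ω i)

/-! The hypothesis says that the pinching by the orthogonal projections
`Q_h = I ⊗ Π_h ⊗ I` fixes `√ρ`, where `ρ = ρ_AB ⊗ ρ_CD`. Since the `Q_h` are complete orthogonal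
idempotents, this forces every `Q_h` to commute with `√ρ`, hence with `ρ = √ρ √ρ`, so that
`ρ = Σ_h Q_h ρ Q_h`. Writing `Q_h = V_h V_hᴴ` with the isometry `V_h = I ⊗ u_h ⊗ I`, each block is
`V_h τ_h V_hᴴ` with `τ_h = V_hᴴ ρ V_h ⪰ 0` on `AD`. Tracing out `CD` (resp. `AB`) writes `ρ_AB`
(resp. `ρ_CD`) as a sum of Kronecker products of positive semidefinite matrices, which normalizes
to a separable decomposition. -/

section Sqrt

variable {N : Type*} [Fintype N] [DecidableEq N]

lemma psdSqrt_eq_cfc {A : Matrix N N ℂ} (hA : A.PosSemidef) : psdSqrt A = cfc Real.sqrt A := by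
  rw [psdSqrt, dif_pos hA, hA.1.cfc_eq, IsHermitian.cfc, Unitary.conjStarAlgAut_apply]
  rfl

lemma psdSqrt_mul_self {A : Matrix N N ℂ} (hA : A.PosSemidef) : psdSqrt A * psdSqrt A = A := by
  have hsa : IsSelfAdjoint A := hA.1
  rw [psdSqrt_eq_cfc hA, ← cfc_mul Real.sqrt Real.sqrt A]
  conv_rhs => rw [← cfc_id' ℝ A]
  refine cfc_congr fun x hx => Real.mul_self_sqrt ?_
  obtain ⟨i, rfl⟩ := hA.1.spectrum_real_eq_range_eigenvalues ▸ hx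
  exact hA.eigenvalues_nonneg i

end Sqrt

section PartialTrace

variable {α β : Type*}

noncomputable def partialTraceRight [Fintype β] (M : Matrix (α × β) (α × β) ℂ) : Matrix α α ℂ :=
  Matrix.of fun i i' => ∑ l, M (i, l) (i', l)

noncomputable def partialTraceLeft [Fintype α] (M : Matrix (α × β) (α × β) ℂ) : Matrix β β ℂ :=
  Matrix.of fun j j' => ∑ i, M (i, j) (i, j')

lemma partialTraceRight_eq_sum_submatrix [Fintype β] (M : Matrix (α × β) (α × β) ℂ) :
    partialTraceRight M = ∑ l, M.submatrix (·, l) (·, l) := by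
  ext i i'
  simp [partialTraceRight, Matrix.sum_apply]

lemma partialTraceLeft_eq_sum_submatrix [Fintype α] (M : Matrix (α × β) (α × β) ℂ) :
    partialTraceLeft M = ∑ i, M.submatrix (i, ·) (i, ·) := by
  ext j j'
  simp [partialTraceLeft, Matrix.sum_apply]

lemma Matrix.PosSemidef.partialTraceRight [Fintype β] {M : Matrix (α × β) (α × β) ℂ}
    (hM : M.PosSemidef) :
    (partialTraceRight M).PosSemidef := by
  rw [partialTraceRight_eq_sum_submatrix]
  exact posSemidef_sum _ fun l _ => hM.submatrix _

lemma Matrix.PosSemidef.partialTraceLeft [Fintype α] {M : Matrix (α × β) (α × β) ℂ}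
    (hM : M.PosSemidef) :
    (partialTraceLeft M).PosSemidef := by
  rw [partialTraceLeft_eq_sum_submatrix]
  exact posSemidef_sum _ fun i _ => hM.submatrix _

lemma partialTraceRight_sum [Fintype β] {ι : Type*} (s : Finset ι)
    (f : ι → Matrix (α × β) (α × β) ℂ) :
    partialTraceRight (∑ h ∈ s, f h) = ∑ h ∈ s, partialTraceRight (f h) := by
  ext i i'
  simp only [partialTraceRight, of_apply, Matrix.sum_apply]
  exact Finset.sum_comm

lemma partialTraceLeft_sum [Fintype α] {ι : Type*} (s : Finset ι)
    (f : ι → Matrix (α × β) (α × β) ℂ) :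
    partialTraceLeft (∑ h ∈ s, f h) = ∑ h ∈ s, partialTraceLeft (f h) := by
  ext j j'
  simp only [partialTraceLeft, of_apply, Matrix.sum_apply]
  exact Finset.sum_comm

lemma partialTraceRight_kronecker [Fintype β] (A : Matrix α α ℂ) (B : Matrix β β ℂ) :
    partialTraceRight (A ⊗ₖ B) = B.trace • A := by
  ext i i'
  simp [partialTraceRight, Matrix.trace, ← Finset.mul_sum, mul_comm]

lemma partialTraceLeft_kronecker [Fintype α] (A : Matrix α α ℂ) (B : Matrix β β ℂ) :
    partialTraceLeft (A ⊗ₖ B) = A.trace • B := by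
  ext j j'
  simp [partialTraceLeft, Matrix.trace, ← Finset.sum_mul]

end PartialTrace

namespace CompleteOrthogonalIdempotents

variable {R I : Type*} [Ring R] [Fintype I] {e : I → R}

lemma mul_sum_mul_mul (he : CompleteOrthogonalIdempotents e) (x : R) (j : I) :
    e j * ∑ i, e i * x * e i = e j * x * e j := by
  classical
  simp only [Finset.mul_sum, ← mul_assoc, he.mul_eq, ite_mul, zero_mul, Finset.sum_ite_eq,
    Finset.mem_univ, if_true]

lemma sum_mul_mul_mul (he : CompleteOrthogonalIdempotents e) (x : R) (j : I) :
    (∑ i, e i * x * e i) * e j = e j * x * e j := by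
  classical
  simp only [Finset.sum_mul, mul_assoc, he.mul_eq, mul_ite, mul_zero, Finset.sum_ite_eq',
    Finset.mem_univ, if_true]

lemma commute_of_sum_mul_mul_eq (he : CompleteOrthogonalIdempotents e) {x : R}
    (hx : ∑ i, e i * x * e i = x) (j : I) : Commute (e j) x :=
  calc e j * x = e j * ∑ i, e i * x * e i := by rw [hx]
    _ = (∑ i, e i * x * e i) * e j := by rw [he.mul_sum_mul_mul, he.sum_mul_mul_mul]
    _ = x * e j := by rw [hx]

lemma sum_mul_mul_eq_of_commute (he : CompleteOrthogonalIdempotents e) {x : R}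
    (hx : ∀ i, Commute (e i) x) : ∑ i, e i * x * e i = x := by
  simp_rw [(hx _).eq, mul_assoc, (he.idem _).eq, ← Finset.mul_sum, he.complete, mul_one]

end CompleteOrthogonalIdempotents

section Separability

lemma Matrix.PosSemidef.exists_isDensity_smul {N : Type*} [Fintype N] [DecidableEq N]
    [Nonempty N] {A : Matrix N N ℂ} (hA : A.PosSemidef) :
    ∃ t : ℝ, 0 ≤ t ∧ ∃ σ, IsDensity σ ∧ A = (t : ℂ) • σ := by
  obtain ⟨t, ht, htr : (t : ℂ) = A.trace⟩ := RCLike.nonneg_iff_exists_ofReal.mp hA.trace_nonneg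
  by_cases h0 : A.trace = 0
  · refine ⟨0, le_rfl, (Fintype.card N : ℂ)⁻¹ • 1, ⟨PosSemidef.one.smul (by positivity), ?_⟩, ?_⟩
    · simp [trace_smul]
    · simp [hA.trace_eq_zero_iff.mp h0]
  · refine ⟨t, ht, (A.trace)⁻¹ • A, ⟨hA.smul ?_, by simp [trace_smul, h0]⟩, ?_⟩
    · rw [← htr]; positivity
    · rw [smul_smul, htr, mul_inv_cancel₀ h0, one_smul]

lemma separable_of_eq_sum_kronecker {p q : ℕ} {ι : Type*} [Fintype ι]
    {τ : Matrix (Fin p × Fin q) (Fin p × Fin q) ℂ}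
    (A : ι → Matrix (Fin p) (Fin p) ℂ) (B : ι → Matrix (Fin q) (Fin q) ℂ)
    (hA : ∀ i, (A i).PosSemidef) (hB : ∀ i, (B i).PosSemidef)
    (hτ : τ = ∑ i, A i ⊗ₖ B i) : Separable τ := by
  rcases isEmpty_or_nonempty (Fin p × Fin q) with _ | ⟨a, b⟩
  · exact ⟨0, Fin.elim0, Fin.elim0, Fin.elim0, (·.elim0), (·.elim0), (·.elim0),
      Subsingleton.elim _ _⟩
  have : Nonempty (Fin p) := ⟨a⟩
  have : Nonempty (Fin q) := ⟨b⟩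
  choose s hs σ hσ hAσ using fun i => (hA i).exists_isDensity_smul
  choose t ht ω hω hBω using fun i => (hB i).exists_isDensity_smul
  let e := (Fintype.equivFin ι).symm
  refine ⟨Fintype.card ι, fun k => s (e k) * t (e k), fun k => σ (e k), fun k => ω (e k),
    fun k => mul_nonneg (hs _) (ht _), fun k => hσ _, fun k => hω _, ?_⟩
  rw [hτ, ← e.sum_comp]
  refine Finset.sum_congr rfl fun k _ => ?_
  rw [hAσ, hBω, smul_kronecker, kronecker_smul, smul_smul, Complex.ofReal_mul]

end Separability

section VonNeumann

variable {N : Type*} [Fintype N] {w : N → N → ℂ}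

lemma projOf_mul_projOf (a b : N) :
    projOf w a * projOf w b = vecMulVec (w a) (cInner (w a) (w b) • star (w b)) := by
  rw [projOf, projOf, outer, outer, vecMulVec_mul_vecMulVec]
  rfl

lemma sum_projOf [DecidableEq N] (hw : IsVNM w) : ∑ h, projOf w h = 1 := by
  let U : Matrix N N ℂ := Matrix.of fun i h => w h i
  have hUU : Uᴴ * U = 1 := by
    ext a b
    simpa [U, Matrix.mul_apply, Matrix.one_apply, cInner] using hw a b
  ext i j
  simpa [U, Matrix.mul_apply, Matrix.sum_apply, projOf, outer, vecMulVec_apply] using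
    congrFun (congrFun (mul_eq_one_comm.mp hUU : U * Uᴴ = 1) i) j

lemma completeOrthogonalIdempotents_projOf [DecidableEq N] (hw : IsVNM w) :
    CompleteOrthogonalIdempotents (projOf w) := by
  refine CompleteOrthogonalIdempotents.iff_ortho_complete.mpr ⟨fun a b hab => ?_, sum_projOf hw⟩
  simp [projOf_mul_projOf, hw a b, hab]

end VonNeumann

noncomputable def ampMidHom (m v : ℕ) {n u : ℕ} :
    Matrix (Fin n × Fin u) (Fin n × Fin u) ℂ →+*
      Matrix ((Fin m × Fin n) × Fin u × Fin v) ((Fin m × Fin n) × Fin u × Fin v) ℂ where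
  toFun := ampMid m v
  map_one' := by
    ext ⟨⟨i, j⟩, k, l⟩ ⟨⟨i', j'⟩, k', l'⟩
    simp only [ampMid, of_apply, Matrix.one_apply, Prod.mk.injEq]
    split_ifs <;> simp_all
  map_mul' P Q := by
    ext ⟨⟨i, j⟩, k, l⟩ ⟨⟨i', j'⟩, k', l'⟩
    simp only [ampMid, Matrix.mul_apply, of_apply, Fintype.sum_prod_type, ite_mul, one_mul,
      zero_mul, mul_ite, mul_one, mul_zero, Finset.sum_ite_eq', Finset.mem_univ, if_true,
      Finset.sum_ite_irrel, Finset.sum_const_zero]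
  map_zero' := by
    ext
    simp [ampMid]
  map_add' P Q := by
    ext
    simp only [ampMid, of_apply, Matrix.add_apply]
    ring

/-- The operator `I_α ⊗ ψ ⊗ I_δ : ℂ^α ⊗ ℂ^δ → ℂ^α ⊗ ℂ^β ⊗ ℂ^γ ⊗ ℂ^δ`, with `ψ` read as a
column vector. -/
noncomputable def midVec (α δ : Type*) {β γ : Type*} [DecidableEq α] [DecidableEq δ]
    (ψ : β × γ → ℂ) : Matrix ((α × β) × γ × δ) (α × δ) ℂ :=
  Matrix.of fun p q => if p.1.1 = q.1 ∧ p.2.2 = q.2 then ψ (p.1.2, p.2.1) else 0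

section MiddleVector

variable {α β γ δ : Type*} [DecidableEq α] [DecidableEq δ]

lemma midVec_mul_conjTranspose {m n u v : ℕ} (ψ : Fin n × Fin u → ℂ) :
    midVec (Fin m) (Fin v) ψ * (midVec (Fin m) (Fin v) ψ)ᴴ = ampMid m v (outer ψ) := by
  ext ⟨⟨i, j⟩, k, l⟩ ⟨⟨i', j'⟩, k', l'⟩
  simp only [midVec, ampMid, Matrix.mul_apply, conjTranspose_apply, of_apply,
    Fintype.sum_prod_type, outer, vecMulVec_apply, Pi.star_apply]
  simp only [ite_and, apply_ite (star : ℂ → ℂ), star_zero, ite_mul, mul_ite,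
    zero_mul, mul_zero, Finset.sum_ite_eq, Finset.mem_univ, if_true, Finset.sum_ite_irrel,
    Finset.sum_const_zero]
  split_ifs <;> ring

variable [Fintype α] [Fintype δ]

lemma midVec_mul_mul_conjTranspose_apply (ψ : β × γ → ℂ) (τ : Matrix (α × δ) (α × δ) ℂ)
    (p q : (α × β) × γ × δ) :
    (midVec α δ ψ * τ * (midVec α δ ψ)ᴴ) p q
      = ψ (p.1.2, p.2.1) * star (ψ (q.1.2, q.2.1)) * τ (p.1.1, p.2.2) (q.1.1, q.2.2) := by
  obtain ⟨⟨i, j⟩, k, l⟩ := p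
  obtain ⟨⟨i', j'⟩, k', l'⟩ := q
  simp only [midVec, Matrix.mul_apply, conjTranspose_apply, of_apply, Fintype.sum_prod_type]
  simp only [ite_and, apply_ite (star : ℂ → ℂ), star_zero, ite_mul, mul_ite, zero_mul, mul_zero,
    Finset.sum_ite_eq, Finset.mem_univ, if_true, Finset.sum_ite_irrel, Finset.sum_const_zero]
  ring

lemma partialTraceRight_midVec_mul_mul_conjTranspose [Fintype γ] (ψ : β × γ → ℂ)
    (τ : Matrix (α × δ) (α × δ) ℂ) :
    partialTraceRight (midVec α δ ψ * τ * (midVec α δ ψ)ᴴ) =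
      partialTraceRight τ ⊗ₖ partialTraceRight (outer ψ) := by
  ext ⟨i, j⟩ ⟨i', j'⟩
  simp only [partialTraceRight, of_apply, kroneckerMap_apply, midVec_mul_mul_conjTranspose_apply,
    outer, vecMulVec_apply, Pi.star_apply, Fintype.sum_prod_type, Finset.sum_mul, Finset.mul_sum]
  exact Finset.sum_congr rfl fun _ _ => Finset.sum_congr rfl fun _ _ => by ring

lemma partialTraceLeft_midVec_mul_mul_conjTranspose [Fintype β] (ψ : β × γ → ℂ)
    (τ : Matrix (α × δ) (α × δ) ℂ) :
    partialTraceLeft (midVec α δ ψ * τ * (midVec α δ ψ)ᴴ) =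
      partialTraceLeft (outer ψ) ⊗ₖ partialTraceLeft τ := by
  ext ⟨k, l⟩ ⟨k', l'⟩
  simp only [partialTraceLeft, of_apply, kroneckerMap_apply, midVec_mul_mul_conjTranspose_apply,
    outer, vecMulVec_apply, Pi.star_apply, Fintype.sum_prod_type, Finset.sum_mul, Finset.mul_sum]

end MiddleVector

theorem stmt9_general {m n u v : ℕ}
    (ρAB : Matrix (Fin m × Fin n) (Fin m × Fin n) ℂ)
    (ρCD : Matrix (Fin u × Fin v) (Fin u × Fin v) ℂ)
    (hAB : IsDensity ρAB) (hCD : IsDensity ρCD)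
    (w : (Fin n × Fin u) → (Fin n × Fin u) → ℂ)
    (hw : IsVNM w)
    (hinv : pinchBC w (psdSqrt (ρAB ⊗ₖ ρCD)) = psdSqrt (ρAB ⊗ₖ ρCD)) :
    Separable ρAB ∧ Separable ρCD := by
  obtain ⟨hABpsd, hABtr⟩ := hAB
  obtain ⟨hCDpsd, hCDtr⟩ := hCD
  have hρ := hABpsd.kronecker hCDpsd
  set ρ := ρAB ⊗ₖ ρCD
  set V := fun h => midVec (Fin m) (Fin v) (w h)
  have hQ : CompleteOrthogonalIdempotents fun h => ampMid m v (projOf w h) :=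
    (completeOrthogonalIdempotents_projOf hw).map (ampMidHom m v)
  have hcomm (h) : Commute (ampMid m v (projOf w h)) ρ := by
    have hs := hQ.commute_of_sum_mul_mul_eq hinv h
    rw [← psdSqrt_mul_self hρ]
    exact hs.mul_right hs
  have hblocks : ∑ h, V h * ((V h)ᴴ * ρ * V h) * (V h)ᴴ = ρ := by
    convert hQ.sum_mul_mul_eq_of_commute hcomm using 2 with h
    simp only [V, projOf, ← midVec_mul_conjTranspose, Matrix.mul_assoc]
  have hτ (h) : ((V h)ᴴ * ρ * V h).PosSemidef := hρ.conjTranspose_mul_mul_same _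
  have hψ (h) : (outer (w h)).PosSemidef := posSemidef_vecMulVec_self_star _
  constructor
  · refine separable_of_eq_sum_kronecker _ _ (fun h => (hτ h).partialTraceRight)
      (fun h => (hψ h).partialTraceRight) ?_
    calc ρAB = partialTraceRight ρ := by rw [partialTraceRight_kronecker, hCDtr, one_smul]
      _ = _ := by
        conv_lhs => rw [← hblocks]
        simp only [V, partialTraceRight_sum, partialTraceRight_midVec_mul_mul_conjTranspose]
  · refine separable_of_eq_sum_kronecker _ _ (fun h => (hψ h).partialTraceLeft)
      (fun h => (hτ h).partialTraceLeft) ?_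
    calc ρCD = partialTraceLeft ρ := by rw [partialTraceLeft_kronecker, hABtr, one_smul]
      _ = _ := by
        conv_lhs => rw [← hblocks]
        simp only [V, partialTraceLeft_sum, partialTraceLeft_midVec_mul_mul_conjTranspose]

/-- If some rank-one von Neumann measurement fixing `ρ_B ⊗ ρ_C` leaves
`√(ρ_AB ⊗ ρ_CD)` invariant, then both ρ_AB and ρ_CD are separable. -/
theorem stmt9 {m n u v : ℕ}
    (ρAB : Matrix (Fin m × Fin n) (Fin m × Fin n) ℂ)
    (ρCD : Matrix (Fin u × Fin v) (Fin u × Fin v) ℂ)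
    (hAB : IsDensity ρAB) (hCD : IsDensity ρCD)
    (w : (Fin n × Fin u) → (Fin n × Fin u) → ℂ)
    (hw : IsVNM w) (hfix : FixesVNM w (redB ρAB ⊗ₖ redC ρCD))
    (hinv : pinchBC w (psdSqrt (ρAB ⊗ₖ ρCD)) = psdSqrt (ρAB ⊗ₖ ρCD)) :
    Separable ρAB ∧ Separable ρCD :=
  stmt9_general ρAB ρCD hAB hCD w hw hinv
end

section
/- Let ρ_AB be a density matrix on ℂ^m⊗ℂ^n and let ρ_BA denote its swap, the density matrix on ℂ^n⊗ℂ^m with entries (ρ_BA)_{(j,i),(j',i')} = (ρ_AB)_{(i,j),(i',j')}. Then N_H^b(ρ_BA⊗ρ_AB) ≥ N_H(ρ_AB); here the middle two tensor factors of ρ_BA⊗ρ_AB are both copies of ℂ^m carrying the marginal ρ_A. -/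
open scoped Matrix Kronecker BigOperators ComplexOrder
open Matrix

/-- The map `X ↦ Σ_k (Π_k ⊗ I_n) X (Π_k ⊗ I_n)` induced by a measurement on the first
factor. -/
noncomputable def pinchA {m n : ℕ} (w : Fin m → Fin m → ℂ)
    (X : Matrix (Fin m × Fin n) (Fin m × Fin n) ℂ) :
    Matrix (Fin m × Fin n) (Fin m × Fin n) ℂ :=
  ∑ k, (projOf w k ⊗ₖ (1 : Matrix (Fin n) (Fin n) ℂ)) * X *
    (projOf w k ⊗ₖ (1 : Matrix (Fin n) (Fin n) ℂ))

/-- Reduced state of the first factor of a bipartite state. -/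
noncomputable def redA {m n : ℕ} (ρ : Matrix (Fin m × Fin n) (Fin m × Fin n) ℂ) :
    Matrix (Fin m) (Fin m) ℂ :=
  Matrix.of fun i i' => ∑ j, ρ (i, j) (i', j)

/-- The modified measurement-induced nonlocality `N_H(ρ_AB)`. -/
noncomputable def NH {m n : ℕ} (ρAB : Matrix (Fin m × Fin n) (Fin m × Fin n) ℂ) : ℝ :=
  sSup { r : ℝ | ∃ w : Fin m → Fin m → ℂ, IsVNM w ∧ FixesVNM w (redA ρAB) ∧
    r = hsNormSq (psdSqrt ρAB - pinchA w (psdSqrt ρAB)) }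

/-!
Given a measurement `w` on `ℂ^m` fixing `ρ_A`, perform it on both middle copies of `ℂ^m`: the
product measurement `w ⊗ w` fixes `ρ_A ⊗ ρ_A`. Since `√(ρ_BA ⊗ ρ_AB) = √ρ_BA ⊗ √ρ_AB`, its
pinching is `Π₁ √ρ_BA ⊗ Π √ρ_AB`, the tensor product of the two one-sided pinchings. A pinching by
orthogonal projections is an orthogonal projection in Hilbert–Schmidt space, so
`‖X - Π X‖² = ‖X‖² - ‖Π X‖²`; with `‖√ρ_BA‖² = tr ρ_BA = 1` and `‖Π₁ √ρ_BA‖² ≤ 1` this gives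
`‖√ρ_AB‖² - ‖Π₁ √ρ_BA‖² ‖Π √ρ_AB‖² ≥ ‖√ρ_AB‖² - ‖Π √ρ_AB‖² = ‖√ρ_AB - Π √ρ_AB‖²`.
-/

section HilbertSchmidt

variable {M N : Type*} [Fintype M] [Fintype N]

lemma trace_conjTranspose_mul_self_eq_hsNormSq (X : Matrix N N ℂ) :
    (Xᴴ * X).trace = hsNormSq X :=
  Complex.eq_re_of_ofReal_le (r := 0) (by
    simpa only [Complex.ofReal_zero] using (posSemidef_conjTranspose_mul_self X).trace_nonneg)

lemma hsNormSq_nonneg (X : Matrix N N ℂ) : 0 ≤ hsNormSq X :=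
  (Complex.nonneg_iff.1 (posSemidef_conjTranspose_mul_self X).trace_nonneg).1

lemma hsNormSq_kronecker (A : Matrix M M ℂ) (B : Matrix N N ℂ) :
    hsNormSq (A ⊗ₖ B) = hsNormSq A * hsNormSq B := by
  have h : ((A ⊗ₖ B)ᴴ * (A ⊗ₖ B)).trace = (Aᴴ * A).trace * (Bᴴ * B).trace := by
    rw [conjTranspose_kronecker, ← mul_kronecker_mul, trace_kronecker]
  simp only [trace_conjTranspose_mul_self_eq_hsNormSq] at h
  exact_mod_cast h

end HilbertSchmidt

section Pinching

variable {R N ι : Type*} [Fintype N] [Fintype ι]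

def pinching [Semiring R] (E : ι → Matrix N N R) (X : Matrix N N R) : Matrix N N R :=
  ∑ i, E i * X * E i

lemma trace_mul_pinching [CommSemiring R] (E : ι → Matrix N N R) (Y X : Matrix N N R) :
    (Y * pinching E X).trace = (pinching E Y * X).trace := by
  simp only [pinching, Matrix.mul_sum, Matrix.sum_mul, trace_sum]
  refine Finset.sum_congr rfl fun i _ => ?_
  rw [← Matrix.mul_assoc, trace_mul_comm, ← Matrix.mul_assoc, ← Matrix.mul_assoc]

lemma pinching_pinching [Semiring R] [DecidableEq N] [DecidableEq ι] {E : ι → Matrix N N R}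
    (hE : OrthogonalIdempotents E) (X : Matrix N N R) :
    pinching E (pinching E X) = pinching E X := by
  simp only [pinching, Matrix.mul_sum, Matrix.sum_mul]
  refine Finset.sum_congr rfl fun i _ => ?_
  rw [Finset.sum_eq_single i]
  · rw [← Matrix.mul_assoc, ← Matrix.mul_assoc, (hE.idem i).eq, Matrix.mul_assoc, (hE.idem i).eq]
  · intro j _ hji
    rw [← Matrix.mul_assoc, ← Matrix.mul_assoc, hE.ortho hji.symm]
    simp only [Matrix.zero_mul]
  · simp

lemma conjTranspose_pinching {E : ι → Matrix N N ℂ} (hE : ∀ i, (E i).IsHermitian)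
    (X : Matrix N N ℂ) : (pinching E X)ᴴ = pinching E Xᴴ := by
  simp only [pinching, conjTranspose_sum, conjTranspose_mul, (hE _).eq, Matrix.mul_assoc]

/-- A pinching by Hermitian orthogonal idempotents is an orthogonal projection for the
Hilbert–Schmidt inner product. -/
lemma hsNormSq_sub_pinching [DecidableEq N] [DecidableEq ι] {E : ι → Matrix N N ℂ}
    (hE : OrthogonalIdempotents E) (hH : ∀ i, (E i).IsHermitian) (X : Matrix N N ℂ) :
    hsNormSq (X - pinching E X) = hsNormSq X - hsNormSq (pinching E X) := by
  have hmix : (Xᴴ * pinching E X).trace = (pinching E Xᴴ * pinching E X).trace := by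
    rw [trace_mul_pinching E (pinching E Xᴴ), pinching_pinching hE, trace_mul_pinching]
  have hmix' : (pinching E Xᴴ * X).trace = (pinching E Xᴴ * pinching E X).trace := by
    rw [← trace_mul_pinching, hmix]
  have h : ((X - pinching E X)ᴴ * (X - pinching E X)).trace
      = (Xᴴ * X).trace - ((pinching E X)ᴴ * pinching E X).trace := by
    rw [conjTranspose_sub, conjTranspose_pinching hH, Matrix.sub_mul, Matrix.mul_sub,
      Matrix.mul_sub, trace_sub, trace_sub, trace_sub, hmix, hmix']
    ring
  simp only [trace_conjTranspose_mul_self_eq_hsNormSq] at h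
  exact_mod_cast h

lemma hsNormSq_sub_pinching_le [DecidableEq N] [DecidableEq ι] {E : ι → Matrix N N ℂ}
    (hE : OrthogonalIdempotents E) (hH : ∀ i, (E i).IsHermitian) (X : Matrix N N ℂ) :
    hsNormSq (X - pinching E X) ≤ hsNormSq X := by
  rw [hsNormSq_sub_pinching hE hH]
  linarith [hsNormSq_nonneg (pinching E X)]

end Pinching

section Kronecker

variable {R L M N ι κ : Type*}

lemma Matrix.IsHermitian.kronecker [CommSemiring R] [StarRing R] {A : Matrix M M R}
    {B : Matrix N N R} (hA : A.IsHermitian) (hB : B.IsHermitian) : (A ⊗ₖ B).IsHermitian := by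
  rw [IsHermitian, conjTranspose_kronecker, hA.eq, hB.eq]

lemma sum_kronecker_sum [CommSemiring R] [Fintype ι] [Fintype κ] (A : ι → Matrix M M R)
    (B : κ → Matrix N N R) :
    (∑ i, A i) ⊗ₖ (∑ k, B k) = ∑ p : ι × κ, A p.1 ⊗ₖ B p.2 := by
  ext
  simp only [kroneckerMap_apply, Matrix.sum_apply, Finset.sum_mul_sum, Fintype.sum_prod_type]

lemma pinching_kronecker [CommSemiring R] [Fintype M] [Fintype N] [Fintype ι] [Fintype κ]
    (E : ι → Matrix M M R) (F : κ → Matrix N N R)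
    (A : Matrix M M R) (B : Matrix N N R) :
    pinching (fun p : ι × κ => E p.1 ⊗ₖ F p.2) (A ⊗ₖ B) = pinching E A ⊗ₖ pinching F B := by
  simp only [pinching, sum_kronecker_sum, mul_kronecker_mul]

lemma OrthogonalIdempotents.kronecker [CommSemiring R] [Fintype M] [Fintype N]
    [DecidableEq M] [DecidableEq N] {E : ι → Matrix M M R}
    {F : κ → Matrix N N R} (hE : OrthogonalIdempotents E) (hF : OrthogonalIdempotents F) :
    OrthogonalIdempotents fun p : ι × κ => E p.1 ⊗ₖ F p.2 := by
  classical
  rw [OrthogonalIdempotents.iff_mul_eq]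
  rintro ⟨i, k⟩ ⟨j, l⟩
  rw [← mul_kronecker_mul, hE.mul_eq, hF.mul_eq]
  by_cases hij : i = j <;> by_cases hkl : k = l <;> simp [hij, hkl]

lemma OrthogonalIdempotents.kronecker_left [CommSemiring R] [Fintype L] [Fintype N]
    [DecidableEq L] [DecidableEq N] {P : Matrix L L R} {E : ι → Matrix N N R}
    (hP : IsIdempotentElem P) (hE : OrthogonalIdempotents E) :
    OrthogonalIdempotents fun i => P ⊗ₖ E i := by
  classical
  rw [OrthogonalIdempotents.iff_mul_eq]
  intro i j
  rw [← mul_kronecker_mul, hP.eq, hE.mul_eq]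
  split_ifs <;> simp

lemma OrthogonalIdempotents.kronecker_right [CommSemiring R] [Fintype L] [Fintype N]
    [DecidableEq L] [DecidableEq N] {P : Matrix L L R} {E : ι → Matrix N N R}
    (hP : IsIdempotentElem P) (hE : OrthogonalIdempotents E) :
    OrthogonalIdempotents fun i => E i ⊗ₖ P := by
  classical
  rw [OrthogonalIdempotents.iff_mul_eq]
  intro i j
  rw [← mul_kronecker_mul, hP.eq, hE.mul_eq]
  split_ifs <;> simp

lemma hsNormSq_sub_pinching_le_kronecker [Fintype M] [Fintype N] [Fintype ι] [Fintype κ]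
    [DecidableEq M] [DecidableEq N] [DecidableEq ι] [DecidableEq κ]
    {E : ι → Matrix M M ℂ} {F : κ → Matrix N N ℂ}
    (hE : OrthogonalIdempotents E) (hEH : ∀ i, (E i).IsHermitian)
    (hF : OrthogonalIdempotents F) (hFH : ∀ k, (F k).IsHermitian)
    {A : Matrix M M ℂ} (hA : hsNormSq A = 1) (B : Matrix N N ℂ) :
    hsNormSq (B - pinching F B) ≤
      hsNormSq (A ⊗ₖ B - pinching (fun p : ι × κ => E p.1 ⊗ₖ F p.2) (A ⊗ₖ B)) := by
  have hPA : hsNormSq (pinching E A) ≤ 1 := by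
    have := hsNormSq_sub_pinching hE hEH A
    linarith [hsNormSq_nonneg (A - pinching E A)]
  rw [hsNormSq_sub_pinching (hE.kronecker hF) fun p => (hEH p.1).kronecker (hFH p.2),
    pinching_kronecker, hsNormSq_kronecker, hsNormSq_kronecker, hA, one_mul,
    hsNormSq_sub_pinching hF hFH]
  exact sub_le_sub_left (mul_le_of_le_one_left (hsNormSq_nonneg _) hPA) _

end Kronecker

section Measurement

variable {M N : Type*}

lemma isHermitian_projOf (u : N → N → ℂ) (h : N) : (projOf u h).IsHermitian := by
  rw [IsHermitian, projOf, outer, conjTranspose_vecMulVec, star_star]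

lemma IsVNM.orthogonalIdempotents [Fintype N] [DecidableEq N] {u : N → N → ℂ} (hu : IsVNM u) :
    OrthogonalIdempotents (projOf u) := by
  rw [OrthogonalIdempotents.iff_mul_eq]
  intro h h'
  simp only [projOf, outer]
  rw [vecMulVec_mul_vecMulVec]
  change vecMulVec (u h) (cInner (u h) (u h') • star (u h')) = _
  rw [hu]
  split_ifs with hh
  · rw [hh, one_smul]
  · rw [zero_smul, vecMulVec_zero]

def prodVNM (u : M → M → ℂ) (u' : N → N → ℂ) : M × N → M × N → ℂ :=
  fun h p => u h.1 p.1 * u' h.2 p.2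

lemma cInner_prodVNM [Fintype M] [Fintype N] (u : M → M → ℂ) (u' : N → N → ℂ) (h h' : M × N) :
    cInner (prodVNM u u' h) (prodVNM u u' h') =
      cInner (u h.1) (u h'.1) * cInner (u' h.2) (u' h'.2) := by
  simp only [cInner, prodVNM, Fintype.sum_prod_type, Finset.sum_mul_sum, star_mul']
  exact Finset.sum_congr rfl fun _ _ => Finset.sum_congr rfl fun _ _ => by ring

lemma IsVNM.prod [Fintype M] [Fintype N] [DecidableEq M] [DecidableEq N] {u : M → M → ℂ}
    {u' : N → N → ℂ} (hu : IsVNM u) (hu' : IsVNM u') : IsVNM (prodVNM u u') := by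
  rintro ⟨a, a'⟩ ⟨b, b'⟩
  rw [cInner_prodVNM, hu, hu']
  by_cases hab : a = b <;> by_cases hab' : a' = b' <;> simp [hab, hab']

lemma projOf_prodVNM (u : M → M → ℂ) (u' : N → N → ℂ) (h : M × N) :
    projOf (prodVNM u u') h = projOf u h.1 ⊗ₖ projOf u' h.2 := by
  ext p q
  simp only [projOf, outer, prodVNM, vecMulVec_apply, kroneckerMap_apply, Pi.star_apply,
    star_mul']
  ring

lemma FixesVNM.prod [Fintype M] [Fintype N] {u : M → M → ℂ} {u' : N → N → ℂ}
    {σ : Matrix M M ℂ} {τ : Matrix N N ℂ} (hσ : FixesVNM u σ) (hτ : FixesVNM u' τ) :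
    FixesVNM (prodVNM u u') (σ ⊗ₖ τ) := by
  change pinching (projOf (prodVNM u u')) (σ ⊗ₖ τ) = σ ⊗ₖ τ
  rw [funext (projOf_prodVNM u u')]
  exact (pinching_kronecker _ _ σ τ).trans (congrArg₂ _ hσ hτ)

end Measurement

section Middle

variable {α β γ δ : Type*}

/-- The regrouping under which `ampMid m v P` becomes `(1 ⊗ₖ P) ⊗ₖ 1`. -/
def midAssoc : (α × β × γ) × δ ≃ (α × β) × γ × δ where
  toFun p := ((p.1.1, p.1.2.1), p.1.2.2, p.2)
  invFun q := ((q.1.1, q.1.2, q.2.1), q.2.2)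
  left_inv _ := rfl
  right_inv _ := rfl

variable {m n u v : ℕ}

lemma ampMid_eq_reindex (P : Matrix (Fin n × Fin u) (Fin n × Fin u) ℂ) :
    ampMid m v P = reindex midAssoc midAssoc (((1 : Matrix (Fin m) (Fin m) ℂ) ⊗ₖ P) ⊗ₖ
      (1 : Matrix (Fin v) (Fin v) ℂ)) := by
  ext p q
  simp only [ampMid, of_apply, reindex_apply, submatrix_apply, kroneckerMap_apply, one_apply]
  rfl

lemma ampMid_kronecker (A : Matrix (Fin n) (Fin n) ℂ) (B : Matrix (Fin u) (Fin u) ℂ) :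
    ampMid m v (A ⊗ₖ B)
      = ((1 : Matrix (Fin m) (Fin m) ℂ) ⊗ₖ A) ⊗ₖ (B ⊗ₖ (1 : Matrix (Fin v) (Fin v) ℂ)) := by
  ext p q
  simp only [ampMid, of_apply, kroneckerMap_apply, one_apply]
  ring

lemma OrthogonalIdempotents.ampMid {ι : Type*}
    {E : ι → Matrix (Fin n × Fin u) (Fin n × Fin u) ℂ} (hE : OrthogonalIdempotents E) :
    OrthogonalIdempotents fun i => ampMid m v (E i) := by
  simp only [ampMid_eq_reindex]
  exact ((hE.kronecker_left IsIdempotentElem.one).kronecker_right IsIdempotentElem.one).map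
    (reindexRingEquiv ℂ (midAssoc (α := Fin m) (δ := Fin v))).toRingHom

lemma Matrix.IsHermitian.ampMid {P : Matrix (Fin n × Fin u) (Fin n × Fin u) ℂ}
    (hP : P.IsHermitian) : (ampMid m v P).IsHermitian := by
  rw [ampMid_eq_reindex]
  exact ((isHermitian_one.kronecker hP).kronecker isHermitian_one).reindex _

lemma pinchBC_eq_pinching (w : Fin n × Fin u → Fin n × Fin u → ℂ)
    (X : Matrix ((Fin m × Fin n) × Fin u × Fin v) ((Fin m × Fin n) × Fin u × Fin v) ℂ) :
    pinchBC w X = pinching (fun h => ampMid m v (projOf w h)) X :=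
  rfl

lemma pinchBC_prodVNM (w : Fin n → Fin n → ℂ) (w' : Fin u → Fin u → ℂ)
    (X : Matrix ((Fin m × Fin n) × Fin u × Fin v) ((Fin m × Fin n) × Fin u × Fin v) ℂ) :
    pinchBC (prodVNM w w') X = pinching (fun p : Fin n × Fin u =>
      ((1 : Matrix (Fin m) (Fin m) ℂ) ⊗ₖ projOf w p.1) ⊗ₖ (projOf w' p.2 ⊗ₖ 1)) X := by
  simp only [pinchBC_eq_pinching, projOf_prodVNM, ampMid_kronecker]

lemma hsNormSq_sub_pinchBC_le {w : Fin n × Fin u → Fin n × Fin u → ℂ} (hw : IsVNM w)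
    (X : Matrix ((Fin m × Fin n) × Fin u × Fin v) ((Fin m × Fin n) × Fin u × Fin v) ℂ) :
    hsNormSq (X - pinchBC w X) ≤ hsNormSq X :=
  hsNormSq_sub_pinching_le hw.orthogonalIdempotents.ampMid
    (fun h => (isHermitian_projOf w h).ampMid) X

end Middle

section SquareRoot

variable {M N : Type*} [Fintype M] [Fintype N] [DecidableEq M] [DecidableEq N]

open scoped MatrixOrder in
lemma psdSqrt_eq_cfcSqrt {A : Matrix N N ℂ} (hA : A.PosSemidef) : psdSqrt A = CFC.sqrt A := by
  rw [psdSqrt, dif_pos hA, CFC.sqrt_eq_cfc, cfc_nnreal_eq_real _ A hA.nonneg, hA.1.cfc_eq,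
    IsHermitian.cfc, Unitary.conjStarAlgAut_apply]
  congr 2
  have hsqrt : ∀ x : ℝ, √(max x 0) = √x := fun x => by
    rcases le_total x 0 with h | h
    · simp [h, Real.sqrt_eq_zero'.mpr h]
    · simp [h]
  ext i j
  simp only [diagonal_apply, Function.comp_apply, Real.coe_sqrt, Real.coe_toNNReal', hsqrt]
  rfl

open scoped MatrixOrder in
lemma psdSqrt_kronecker {A : Matrix M M ℂ} {B : Matrix N N ℂ} (hA : A.PosSemidef)
    (hB : B.PosSemidef) : psdSqrt (A ⊗ₖ B) = psdSqrt A ⊗ₖ psdSqrt B := by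
  rw [psdSqrt_eq_cfcSqrt hA, psdSqrt_eq_cfcSqrt hB, psdSqrt_eq_cfcSqrt (hA.kronecker hB)]
  refine CFC.sqrt_unique ?_ ((CFC.sqrt_nonneg A).posSemidef.kronecker
    (CFC.sqrt_nonneg B).posSemidef).nonneg
  rw [← mul_kronecker_mul, CFC.sqrt_mul_sqrt_self A hA.nonneg, CFC.sqrt_mul_sqrt_self B hB.nonneg]

open scoped MatrixOrder in
lemma IsDensity.hsNormSq_psdSqrt {ρ : Matrix N N ℂ} (hρ : IsDensity ρ) :
    hsNormSq (psdSqrt ρ) = 1 := by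
  have h : ((psdSqrt ρ)ᴴ * psdSqrt ρ).trace = 1 := by
    rw [psdSqrt_eq_cfcSqrt hρ.1, (CFC.sqrt_nonneg ρ).posSemidef.1.eq,
      CFC.sqrt_mul_sqrt_self ρ hρ.1.nonneg, hρ.2]
  rw [trace_conjTranspose_mul_self_eq_hsNormSq] at h
  exact_mod_cast h

lemma IsDensity.submatrix_equiv {ρ : Matrix N N ℂ} (hρ : IsDensity ρ) (e : M ≃ N) :
    IsDensity (ρ.submatrix e e) :=
  ⟨hρ.1.submatrix e, (e.sum_comp fun i => ρ i i).trans hρ.2⟩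

end SquareRoot

section Nonlocality

variable {m n u v : ℕ}

lemma redB_submatrix_swap (ρ : Matrix (Fin m × Fin n) (Fin m × Fin n) ℂ) :
    redB (ρ.submatrix Prod.swap Prod.swap) = redA ρ :=
  rfl

lemma redC_eq_redA (ρ : Matrix (Fin m × Fin n) (Fin m × Fin n) ℂ) :
    redC ρ = redA ρ :=
  rfl

lemma NHb_nonneg (ρ₁ : Matrix (Fin m × Fin n) (Fin m × Fin n) ℂ)
    (ρ₂ : Matrix (Fin u × Fin v) (Fin u × Fin v) ℂ) : 0 ≤ NHb ρ₁ ρ₂ :=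
  Real.sSup_nonneg fun _ ⟨_, _, _, hr⟩ => hr ▸ hsNormSq_nonneg _

lemma le_NHb {ρ₁ : Matrix (Fin m × Fin n) (Fin m × Fin n) ℂ}
    {ρ₂ : Matrix (Fin u × Fin v) (Fin u × Fin v) ℂ} {w : Fin n × Fin u → Fin n × Fin u → ℂ}
    (hw : IsVNM w) (hfix : FixesVNM w (redB ρ₁ ⊗ₖ redC ρ₂)) :
    hsNormSq (psdSqrt (ρ₁ ⊗ₖ ρ₂) - pinchBC w (psdSqrt (ρ₁ ⊗ₖ ρ₂))) ≤ NHb ρ₁ ρ₂ :=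
  le_csSup ⟨hsNormSq (psdSqrt (ρ₁ ⊗ₖ ρ₂)), fun _ ⟨_, hw', _, hr⟩ =>
    hr ▸ hsNormSq_sub_pinchBC_le hw' _⟩ ⟨w, hw, hfix, rfl⟩

end Nonlocality

/-- `N_H^b(ρ_BA ⊗ ρ_AB) ≥ N_H(ρ_AB)`. -/
theorem stmt10 {m n : ℕ}
    (ρAB : Matrix (Fin m × Fin n) (Fin m × Fin n) ℂ) (hAB : IsDensity ρAB)
    (ρBA : Matrix (Fin n × Fin m) (Fin n × Fin m) ℂ)
    (hBA : ρBA = Matrix.of fun p q => ρAB (p.2, p.1) (q.2, q.1)) :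
    NH ρAB ≤ NHb ρBA ρAB := by
  replace hBA : ρBA = ρAB.submatrix Prod.swap Prod.swap := hBA
  have hBA_density : IsDensity ρBA := hBA ▸ hAB.submatrix_equiv (Equiv.prodComm _ _)
  refine Real.sSup_le ?_ (NHb_nonneg _ _)
  rintro _ ⟨w, hw, hfix, rfl⟩
  have hfix₂ : FixesVNM (prodVNM w w) (redB ρBA ⊗ₖ redC ρAB) := by
    rw [hBA, redB_submatrix_swap, redC_eq_redA]
    exact hfix.prod hfix
  refine le_trans ?_ (le_NHb (hw.prod hw) hfix₂)
  rw [psdSqrt_kronecker hBA_density.1 hAB.1, pinchBC_prodVNM]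
  exact hsNormSq_sub_pinching_le_kronecker
    (hw.orthogonalIdempotents.kronecker_left IsIdempotentElem.one)
    (fun k => isHermitian_one.kronecker (isHermitian_projOf w k))
    (hw.orthogonalIdempotents.kronecker_right IsIdempotentElem.one)
    (fun k => (isHermitian_projOf w k).kronecker isHermitian_one)
    hBA_density.hsNormSq_psdSqrt (psdSqrt ρAB)
end
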